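/- arXiv:1807.10455 — 2 statements merged into one kernel-verified Lean document; each statement's English description precedes it below -/
import Mathlib

section
/- Let f : ℝ^d → ℝ be convex lower semicontinuous and L-smooth with respect to a norm ‖·‖, let 𝒦 ⊆ ℝ^d be compact convex, let x* minimize f over 𝒦, and let R : ℝ^d → ℝ be 1-strongly convex with respect to ‖·‖ with z = argmin_{x ∈ 𝒦} R(x). Set α_t = t, A_t = t(t+1)/2, η = 1/(4L). Run the Fenchel-game dynamics: y_t = ∇f(x̃_t) with x̃_t = (1/A_t)(α_t x_{t−1} + Σ_{s=1}^{t−1} α_s x_s), and x_t = argmin_{x ∈ 𝒦} [Σ_{s=1}^t ⟨x, α_s y_s⟩ + (1/η) R(x)] (Be-The-Regularized-Leader), with x_0 = z. Then x̄_T = (1/A_T) Σ_{t=1}^T α_t x_t satisfies f(x̄_T) − min_{x ∈ 𝒦} f(x) ≤ 8 L (R(x*) − R(z)) / (T(T+1)). -/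
/-!
The gradients `y_s = ∇f(x̃_s)` give affine minorants `ℓ_s(w) = f(x̃_s) + ⟪y_s, w - x̃_s⟫` of `f`,
and `ψ_t = ∑_{s ≤ t} α_s ℓ_s + R/η` differs from the x-player's objective by a constant, so `x_t`
minimizes `ψ_t` over `K` and, `ψ_t` being `1/η`-strongly convex, `ψ_t(x_{t+1})` exceeds `ψ_t(x_t)`
by at least `N(x_{t+1} - x_t)² / 2η`. Since `x̄_t - x̃_t = (α_t / A_t)(x_t - x_{t-1})`, the descent
lemma at `x̃_t` bounds `A_t f(x̄_t)` by `A_{t-1} f(x̄_{t-1}) + α_t ℓ_t(x_t)` plus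
`L α_t² / 2A_t · N(x_t - x_{t-1})²`, and `L α_t² / A_t ≤ 1/η`. Hence the gap
`A_t f(x̄_t) - ψ_t(x_t)` never increases from its initial value `-R(z)/η`, while
`ψ_T(x_T) ≤ ψ_T(x*) ≤ A_T f(x*) + R(x*)/η`.
-/

open scoped RealInnerProductSpace
open Finset

/-- The dual norm of a norm `N` on ℝ^d: `‖y‖_* = sup {⟪x, y⟫ : N x ≤ 1}`. -/
noncomputable def dualNorm {d : ℕ} (N : EuclideanSpace ℝ (Fin d) → ℝ)
    (y : EuclideanSpace ℝ (Fin d)) : ℝ :=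
  sSup ((fun x => ⟪x, y⟫) '' {x | N x ≤ 1})

theorem Seminorm.exists_pos_mul_norm_le {E : Type*} [NormedAddCommGroup E] [NormedSpace ℝ E]
    [FiniteDimensional ℝ E] (p : Seminorm ℝ E) (hp : ∀ u, p u = 0 → u = 0) :
    ∃ m > 0, ∀ u, m * ‖u‖ ≤ p u := by
  have hcont : Continuous p := continuousOn_univ.mp (p.convexOn.continuousOn isOpen_univ)
  obtain ⟨m, hm, hmin⟩ := (isCompact_sphere (0 : E) 1).exists_forall_le' hcont.continuousOn
    fun v hv => (apply_nonneg p v).lt_of_ne' fun h => by simp [hp v h] at hv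
  refine ⟨m, hm, fun u => ?_⟩
  rcases eq_or_ne u 0 with rfl | hu
  · simp
  have hnu : 0 < ‖u‖ := norm_pos_iff.mpr hu
  have := hmin (‖u‖⁻¹ • u) (by simp [norm_smul, hnu.ne'])
  rw [map_smul_eq_mul, norm_inv, norm_norm, le_inv_mul_iff₀ hnu] at this
  linarith

theorem inner_le_mul_dualNorm {d : ℕ} (p : Seminorm ℝ (EuclideanSpace ℝ (Fin d)))
    (hp : ∀ u, p u = 0 → u = 0) (w g : EuclideanSpace ℝ (Fin d)) :
    ⟪w, g⟫ ≤ p w * dualNorm p g := by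
  obtain ⟨m, hm, hpm⟩ := p.exists_pos_mul_norm_le hp
  have hbdd : BddAbove ((fun x => ⟪x, g⟫) '' {x | p x ≤ 1}) := by
    refine ⟨‖g‖ / m, ?_⟩
    rintro _ ⟨v, hv, rfl⟩
    have hv' : ‖v‖ ≤ 1 / m := by rw [le_div_iff₀ hm]; linarith [hpm v, hv.out]
    calc ⟪v, g⟫ ≤ ‖v‖ * ‖g‖ := real_inner_le_norm v g
      _ ≤ 1 / m * ‖g‖ := by gcongr
      _ = ‖g‖ / m := by ring
  rcases (apply_nonneg p w).eq_or_lt with hw | hw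
  · simp [hp w hw.symm]
  have hunit : ⟪(p w)⁻¹ • w, g⟫ ≤ dualNorm p g :=
    le_csSup hbdd ⟨_, by simp [map_smul_eq_mul, abs_of_pos hw, hw.ne'], rfl⟩
  rw [real_inner_smul_left, inv_mul_le_iff₀ hw] at hunit
  exact hunit

section InnerProductSpace

variable {E : Type*} [NormedAddCommGroup E] [InnerProductSpace ℝ E]

theorem add_sq_le_of_isMinOn (p : Seminorm ℝ E) {R : E → ℝ}
    (hR : ∀ u v : E, ∀ a : ℝ, 0 ≤ a → a ≤ 1 →
      R (a • u + (1 - a) • v) ≤ a * R u + (1 - a) * R v - 1 / 2 * a * (1 - a) * p (u - v) ^ 2)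
    {K : Set E} (hK : Convex ℝ K) {G : E} {c : ℝ} (hc : 0 ≤ c) {x₀ w : E} (hx₀ : x₀ ∈ K)
    (hmin : IsMinOn (fun w => ⟪w, G⟫ + c * R w) K x₀) (hw : w ∈ K) :
    ⟪x₀, G⟫ + c * R x₀ + c / 2 * p (w - x₀) ^ 2 ≤ ⟪w, G⟫ + c * R w := by
  set Φ := fun w => ⟪w, G⟫ + c * R w
  -- comparing `x₀` with `a • w + (1 - a) • x₀` and letting `a → 0`
  have key : ∀ a : ℝ, 0 < a → a ≤ 1 → (1 - a) * (c / 2 * p (w - x₀) ^ 2) ≤ Φ w - Φ x₀ := by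
    intro a ha0 ha1
    have h1 := isMinOn_iff.mp hmin _ (hK hw hx₀ ha0.le (sub_nonneg.mpr ha1) (add_sub_cancel a 1))
    have h2 := mul_le_mul_of_nonneg_left (hR w x₀ a ha0.le ha1) hc
    simp only [Φ, inner_add_left, real_inner_smul_left] at h1 ⊢
    nlinarith
  have hlim : Filter.Tendsto (fun a : ℝ => (1 - a) * (c / 2 * p (w - x₀) ^ 2))
      (nhdsWithin 0 (Set.Ioi 0)) (nhds (c / 2 * p (w - x₀) ^ 2)) := by
    have : Continuous fun a : ℝ => (1 - a) * (c / 2 * p (w - x₀) ^ 2) := by fun_prop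
    simpa using this.continuousWithinAt (s := Set.Ioi 0) (x := 0) |>.tendsto
  have hev : ∀ᶠ a in nhdsWithin 0 (Set.Ioi 0),
      (1 - a) * (c / 2 * p (w - x₀) ^ 2) ≤ Φ w - Φ x₀ := by
    filter_upwards [Ioc_mem_nhdsGT zero_lt_one] with a ha using key a ha.1 ha.2
  have := le_of_tendsto hlim hev
  simp only [Φ] at this
  linarith

variable [CompleteSpace E] {f : E → ℝ}

theorem hasDerivAt_comp_add_smul {u w : E} {t : ℝ} (hf : DifferentiableAt ℝ f (u + t • w)) :
    HasDerivAt (fun s : ℝ => f (u + s • w)) ⟪gradient f (u + t • w), w⟫ t := by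
  have hline : HasDerivAt (fun s : ℝ => u + s • w) w t := by
    simpa using ((hasDerivAt_id t).smul_const w).const_add u
  have := hf.hasGradientAt.hasFDerivAt.comp_hasDerivAt t hline
  rwa [InnerProductSpace.toDual_apply_apply] at this

noncomputable def linearization (f : E → ℝ) (u w : E) : ℝ :=
  f u + ⟪gradient f u, w - u⟫

theorem add_mul_linearization (f : E → ℝ) (u : E) {a b : ℝ} (hab : a + b ≠ 0) (v w : E) :
    (a + b) * linearization f u ((a + b)⁻¹ • (a • v + b • w))
      = a * linearization f u v + b * linearization f u w := by
  simp only [linearization, inner_sub_right, inner_smul_right, inner_add_right]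
  field_simp
  ring

theorem ConvexOn.linearization_le (hf : ConvexOn ℝ Set.univ f) {u : E}
    (hd : DifferentiableAt ℝ f u) (w : E) : linearization f u w ≤ f w := by
  have hline : ConvexOn ℝ Set.univ fun s : ℝ => f (u + s • (w - u)) := by
    simpa [Function.comp_def, AffineMap.lineMap_apply_module', add_comm]
      using hf.comp_affineMap (AffineMap.lineMap u w)
  have := hline.le_slope_of_hasDerivAt (Set.mem_univ 0) (Set.mem_univ 1) one_pos
    (hasDerivAt_comp_add_smul (by simpa using hd))
  simp only [slope_def_field, zero_smul, add_zero, one_smul, add_sub_cancel, sub_zero,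
    div_one] at this
  simp only [linearization]
  linarith

theorem le_linearization_add_sq (p : Seminorm ℝ E) {L : ℝ} (hd : Differentiable ℝ f)
    (hsmooth : ∀ u v w, ⟪gradient f u - gradient f v, w⟫ ≤ L * p (u - v) * p w) (u w : E) :
    f w ≤ linearization f u w + L / 2 * p (w - u) ^ 2 := by
  set v := w - u
  set φ : ℝ → ℝ := fun s => f (u + s • v) - s * ⟪gradient f u, v⟫ - L / 2 * s ^ 2 * p v ^ 2
  have hφ : ∀ s, HasDerivAt φ
      (⟪gradient f (u + s • v), v⟫ - ⟪gradient f u, v⟫ - L * s * p v ^ 2) s := by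
    intro s
    refine (((hasDerivAt_comp_add_smul (hd _)).sub
      ((hasDerivAt_id s).mul_const ⟪gradient f u, v⟫)).sub
      (((hasDerivAt_pow 2 s).const_mul (L / 2)).mul_const (p v ^ 2))).congr_deriv ?_
    ring
  have hanti : AntitoneOn φ (Set.Icc 0 1) := by
    refine antitoneOn_of_hasDerivWithinAt_nonpos (convex_Icc 0 1)
      (HasDerivAt.continuousOn fun s _ => hφ s) (fun s _ => (hφ s).hasDerivWithinAt) ?_
    intro s hs
    rw [interior_Icc] at hs
    have := hsmooth (u + s • v) u v
    rw [add_sub_cancel_left, map_smul_eq_mul, Real.norm_of_nonneg hs.1.le, inner_sub_left] at this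
    nlinarith
  have := hanti (Set.left_mem_Icc.mpr zero_le_one) (Set.right_mem_Icc.mpr zero_le_one) zero_le_one
  simp only [φ, linearization, zero_smul, add_zero, one_smul, zero_mul, sub_zero, one_pow,
    mul_one, zero_pow two_ne_zero, v, add_sub_cancel] at this ⊢
  linarith

theorem linearCoupling_le (p : Seminorm ℝ E) {L : ℝ} (hf : ConvexOn ℝ Set.univ f)
    (hd : Differentiable ℝ f)
    (hsmooth : ∀ u v w, ⟪gradient f u - gradient f v, w⟫ ≤ L * p (u - v) * p w)
    {a b : ℝ} (ha : 0 ≤ a) (hab : 0 < a + b) (v u u' : E) :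
    (a + b) * f ((a + b)⁻¹ • (a • v + b • u'))
      ≤ a * f v + b * linearization f ((a + b)⁻¹ • (a • v + b • u)) u'
        + L / 2 * (b ^ 2 / (a + b)) * p (u' - u) ^ 2 := by
  set xtil := (a + b)⁻¹ • (a • v + b • u)
  have hstep : (a + b)⁻¹ • (a • v + b • u') - xtil = (b / (a + b)) • (u' - u) := by
    simp only [xtil]; module
  have hdesc := le_linearization_add_sq p hd hsmooth xtil ((a + b)⁻¹ • (a • v + b • u'))
  rw [hstep, map_smul_eq_mul, Real.norm_eq_abs, mul_pow, sq_abs] at hdesc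
  have hv := mul_le_mul_of_nonneg_left (hf.linearization_le (hd xtil) v) ha
  calc (a + b) * f ((a + b)⁻¹ • (a • v + b • u'))
      ≤ (a + b) * (linearization f xtil ((a + b)⁻¹ • (a • v + b • u'))
          + L / 2 * ((b / (a + b)) ^ 2 * p (u' - u) ^ 2)) :=
        mul_le_mul_of_nonneg_left hdesc hab.le
    _ = a * linearization f xtil v + b * linearization f xtil u'
          + L / 2 * (b ^ 2 / (a + b)) * p (u' - u) ^ 2 := by
        rw [mul_add, add_mul_linearization f xtil hab.ne']
        field_simp
    _ ≤ _ := by linarith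

/-- Nesterov's estimate function `ψ_t`; up to a constant, it is the x-player's objective in round
`t` (see `regularizedModel_eq`). -/
noncomputable def regularizedModel (f R : E → ℝ) (η : ℝ) (α : ℕ → ℝ) (xtil : ℕ → E) (t : ℕ)
    (w : E) : ℝ :=
  ∑ s ∈ Icc 1 t, α s * linearization f (xtil s) w + R w / η

section RegularizedModel

variable (p : Seminorm ℝ E) {L η : ℝ} {R : E → ℝ} {α A : ℕ → ℝ} {x xtil : ℕ → E}

theorem regularizedModel_zero (w : E) : regularizedModel f R η α xtil 0 w = R w / η := by
  simp [regularizedModel]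

theorem regularizedModel_succ (t : ℕ) (w : E) :
    regularizedModel f R η α xtil (t + 1) w
      = regularizedModel f R η α xtil t w + α (t + 1) * linearization f (xtil (t + 1)) w := by
  simp only [regularizedModel, sum_Icc_succ_top (Nat.le_add_left 1 t)]
  ring

theorem regularizedModel_le (hf : ConvexOn ℝ Set.univ f) (hd : Differentiable ℝ f) {t : ℕ}
    (hα : ∀ s ∈ Icc 1 t, 0 ≤ α s) (w : E) :
    regularizedModel f R η α xtil t w ≤ (∑ s ∈ Icc 1 t, α s) * f w + R w / η := by
  rw [regularizedModel, sum_mul]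
  gcongr with s hs
  · exact hα s hs
  · exact hf.linearization_le (hd _) w

theorem regularizedModel_eq {y : ℕ → E} {t : ℕ}
    (hy : ∀ s ∈ Icc 1 t, y s = gradient f (xtil s)) (w : E) :
    regularizedModel f R η α xtil t w
      = ∑ s ∈ Icc 1 t, α s * (f (xtil s) - ⟪xtil s, y s⟫)
        + (⟪w, ∑ s ∈ Icc 1 t, α s • y s⟫ + 1 / η * R w) := by
  rw [regularizedModel, inner_sum, ← add_assoc, ← sum_add_distrib]
  congr 1
  · refine sum_congr rfl fun s hs => ?_
    rw [linearization, hy s hs, real_inner_smul_right, inner_sub_right, real_inner_comm w,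
      real_inner_comm (xtil s)]
    ring
  · ring

theorem regularizedModel_add_sq_le {y : ℕ → E}
    (hR : ∀ u v : E, ∀ a : ℝ, 0 ≤ a → a ≤ 1 →
      R (a • u + (1 - a) • v) ≤ a * R u + (1 - a) * R v - 1 / 2 * a * (1 - a) * p (u - v) ^ 2)
    {K : Set E} (hK : Convex ℝ K) (hη : 0 < η) {t : ℕ}
    (hy : ∀ s ∈ Icc 1 t, y s = gradient f (xtil s)) {x' w : E} (hx' : x' ∈ K)
    (hmin : IsMinOn (fun w => ∑ s ∈ Icc 1 t, α s * ⟪w, y s⟫ + 1 / η * R w) K x') (hw : w ∈ K) :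
    regularizedModel f R η α xtil t x' + 1 / η / 2 * p (w - x') ^ 2
      ≤ regularizedModel f R η α xtil t w := by
  have hmin' : IsMinOn (fun w => ⟪w, ∑ s ∈ Icc 1 t, α s • y s⟫ + 1 / η * R w) K x' := by
    simpa only [inner_sum, real_inner_smul_right] using hmin
  have := add_sq_le_of_isMinOn p hR hK (by positivity) hx' hmin' hw
  rw [regularizedModel_eq hy, regularizedModel_eq hy]
  linarith

theorem regularizedModel_gap_succ_le (hf : ConvexOn ℝ Set.univ f) (hd : Differentiable ℝ f)
    (hsmooth : ∀ u v w, ⟪gradient f u - gradient f v, w⟫ ≤ L * p (u - v) * p w) {t : ℕ}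
    (hA : A (t + 1) = A t + α (t + 1)) (hAt : 0 ≤ A t) (hAt' : 0 < A (t + 1))
    (hstep : L * α (t + 1) ^ 2 ≤ A (t + 1) / η) {v : E}
    (hxtil : xtil (t + 1) = (A (t + 1))⁻¹ • (A t • v + α (t + 1) • x t))
    (hgain : regularizedModel f R η α xtil t (x t) + 1 / η / 2 * p (x (t + 1) - x t) ^ 2
      ≤ regularizedModel f R η α xtil t (x (t + 1))) :
    A (t + 1) * f ((A (t + 1))⁻¹ • (A t • v + α (t + 1) • x (t + 1)))
        - regularizedModel f R η α xtil (t + 1) (x (t + 1))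
      ≤ A t * f v - regularizedModel f R η α xtil t (x t) := by
  have hc := linearCoupling_le p hf hd hsmooth hAt (hA ▸ hAt') v (x t) (x (t + 1))
  rw [← hA, ← hxtil] at hc
  have hcoef : L / 2 * (α (t + 1) ^ 2 / A (t + 1)) ≤ 1 / η / 2 := by
    rw [mul_div_assoc', div_le_iff₀ hAt']
    linarith [show A (t + 1) / η = 1 / η * A (t + 1) by ring]
  have := mul_le_mul_of_nonneg_right hcoef (sq_nonneg (p (x (t + 1) - x t)))
  rw [regularizedModel_succ]
  linarith

end RegularizedModel

section FenchelGame

variable (p : Seminorm ℝ E) {L η : ℝ} {R : E → ℝ} {K : Set E} {α A : ℕ → ℝ} {x xtil y : ℕ → E}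
  {T : ℕ} (hf : ConvexOn ℝ Set.univ f) (hd : Differentiable ℝ f)
  (hsmooth : ∀ u v w, ⟪gradient f u - gradient f v, w⟫ ≤ L * p (u - v) * p w)
  (hR : ∀ u v : E, ∀ a : ℝ, 0 ≤ a → a ≤ 1 →
    R (a • u + (1 - a) • v) ≤ a * R u + (1 - a) * R v - 1 / 2 * a * (1 - a) * p (u - v) ^ 2)
  (hK : Convex ℝ K) (hη : 0 < η)
  (hα : ∀ s, 1 ≤ s → 0 < α s) (hA : ∀ t, A t = ∑ s ∈ Icc 1 t, α s)
  (hstep : ∀ t, 1 ≤ t → L * α t ^ 2 ≤ A t / η)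
  (hxtil : ∀ t, 1 ≤ t →
    xtil t = (A t)⁻¹ • (α t • x (t - 1) + ∑ s ∈ Icc 1 (t - 1), α s • x s))
  (hy : ∀ t, 1 ≤ t → y t = gradient f (xtil t))
  (hx : ∀ t ≤ T, x t ∈ K ∧
    IsMinOn (fun w => ∑ s ∈ Icc 1 t, α s * ⟪w, y s⟫ + 1 / η * R w) K (x t))

include hf hd hsmooth hR hK hη hα hA hstep hxtil hy hx in
theorem regularizedModel_gap_le :
    ∀ t ≤ T, A t * f ((A t)⁻¹ • ∑ s ∈ Icc 1 t, α s • x s)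
      - regularizedModel f R η α xtil t (x t) ≤ -(R (x 0) / η) := by
  have hA_succ : ∀ t, A (t + 1) = A t + α (t + 1) := fun t => by
    rw [hA, hA, sum_Icc_succ_top (Nat.le_add_left 1 t)]
  have hA_pos : ∀ t, 1 ≤ t → 0 < A t := fun t ht =>
    hA t ▸ sum_pos (fun s hs => hα s (mem_Icc.1 hs).1) ⟨1, mem_Icc.2 ⟨le_rfl, ht⟩⟩
  have hA_nonneg : ∀ t, 0 ≤ A t := fun t =>
    hA t ▸ sum_nonneg fun s hs => (hα s (mem_Icc.1 hs).1).le
  have hA_smul : ∀ t, A t • (A t)⁻¹ • ∑ s ∈ Icc 1 t, α s • x s = ∑ s ∈ Icc 1 t, α s • x s := by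
    rintro (_ | t)
    · simp
    · exact smul_inv_smul₀ (hA_pos _ (Nat.le_add_left 1 t)).ne' _
  intro t
  induction t with
  | zero => intro; simp [hA, regularizedModel_zero]
  | succ t ih =>
    intro ht
    set v := (A t)⁻¹ • ∑ s ∈ Icc 1 t, α s • x s
    have hxtil' : xtil (t + 1) = (A (t + 1))⁻¹ • (A t • v + α (t + 1) • x t) := by
      rw [hxtil _ (Nat.le_add_left 1 t), Nat.add_sub_cancel, add_comm (α (t + 1) • x t), hA_smul]
    have hgain := regularizedModel_add_sq_le p hR hK hη (fun s hs => hy s (mem_Icc.1 hs).1)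
      (hx t (by omega)).1 (hx t (by omega)).2 (hx (t + 1) ht).1
    have := regularizedModel_gap_succ_le p hf hd hsmooth (hA_succ t) (hA_nonneg t)
      (hA_pos _ (Nat.le_add_left 1 t)) (hstep _ (Nat.le_add_left 1 t)) hxtil' hgain
    rw [sum_Icc_succ_top (Nat.le_add_left 1 t), ← hA_smul t]
    linarith [ih (by omega)]

include hf hd hsmooth hR hK hη hα hA hstep hxtil hy hx in
theorem fenchelGame_bound {w : E} (hw : w ∈ K) :
    A T * f ((A T)⁻¹ • ∑ t ∈ Icc 1 T, α t • x t) + R (x 0) / η ≤ A T * f w + R w / η := by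
  have hgap := regularizedModel_gap_le p hf hd hsmooth hR hK hη hα hA hstep hxtil hy hx T le_rfl
  have hmin := regularizedModel_add_sq_le p hR hK hη (fun s hs => hy s (mem_Icc.1 hs).1)
    (hx T le_rfl).1 (hx T le_rfl).2 hw
  have hmodel := regularizedModel_le (R := R) (η := η) (xtil := xtil) (t := T) hf hd
    (fun s hs => (hα s (mem_Icc.1 hs).1).le) w
  rw [← hA] at hmodel
  have : 0 ≤ 1 / η / 2 * p (w - x T) ^ 2 := by positivity
  linarith

end FenchelGame

end InnerProductSpace

theorem sum_Icc_one_natCast (t : ℕ) : ∑ s ∈ Icc 1 t, (s : ℝ) = t * (t + 1) / 2 := by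
  induction t with
  | zero => simp
  | succ t ih =>
    rw [sum_Icc_succ_top (Nat.le_add_left 1 t), ih]
    push_cast
    ring

theorem nesterov_infty_memory_rate_general {d : ℕ}
    (f : EuclideanSpace ℝ (Fin d) → ℝ)
    (K : Set (EuclideanSpace ℝ (Fin d)))
    (hconv : ConvexOn ℝ Set.univ f)
    (hKconv : Convex ℝ K)
    (N : EuclideanSpace ℝ (Fin d) → ℝ)
    -- N is a norm
    (hN_add : ∀ u v, N (u + v) ≤ N u + N v)
    (hN_smul : ∀ (a : ℝ) (u : EuclideanSpace ℝ (Fin d)), N (a • u) = |a| * N u)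
    (hN_zero : ∀ u, N u = 0 → u = 0)
    -- f is L-smooth with respect to N
    (L : ℝ) (hL : 0 < L)
    (hdiff : Differentiable ℝ f)
    (hsmooth : ∀ u v, dualNorm N (gradient f u - gradient f v) ≤ L * N (u - v))
    -- x* minimizes f over K
    (xstar : EuclideanSpace ℝ (Fin d)) (hxstar : xstar ∈ K)
    -- R is 1-strongly convex w.r.t. N, minimized over K at z
    (R : EuclideanSpace ℝ (Fin d) → ℝ)
    (hR : ∀ u v : EuclideanSpace ℝ (Fin d), ∀ a : ℝ, 0 ≤ a → a ≤ 1 →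
      R (a • u + (1 - a) • v)
        ≤ a * R u + (1 - a) * R v - 1 / 2 * a * (1 - a) * (N (u - v)) ^ 2)
    (z : EuclideanSpace ℝ (Fin d)) (hzK : z ∈ K) (hz : ∀ w ∈ K, R z ≤ R w)
    (η : ℝ) (hη : η = 1 / (4 * L))
    (T : ℕ) (hT : 1 ≤ T)
    (A : ℕ → ℝ) (hA : ∀ t, A t = (t : ℝ) * (t + 1) / 2)
    -- the game dynamics
    (x : ℕ → EuclideanSpace ℝ (Fin d)) (hx0 : x 0 = z)
    (xtil : ℕ → EuclideanSpace ℝ (Fin d))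
    (hxtil : ∀ t, 1 ≤ t →
      xtil t = (A t)⁻¹ • ((t : ℝ) • x (t - 1) + ∑ s ∈ Icc 1 (t - 1), (s : ℝ) • x s))
    (y : ℕ → EuclideanSpace ℝ (Fin d))
    (hy : ∀ t, 1 ≤ t → y t = gradient f (xtil t))
    (hx : ∀ t, 1 ≤ t → t ≤ T → x t ∈ K ∧ ∀ w ∈ K,
      (∑ s ∈ Icc 1 t, (s : ℝ) * ⟪x t, y s⟫) + (1 / η) * R (x t)
        ≤ (∑ s ∈ Icc 1 t, (s : ℝ) * ⟪w, y s⟫) + (1 / η) * R w)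
    (xbar : EuclideanSpace ℝ (Fin d))
    (hxbar : xbar = (A T)⁻¹ • ∑ t ∈ Icc 1 T, (t : ℝ) • x t) :
    f xbar - f xstar ≤ 8 * L * (R xstar - R z) / ((T : ℝ) * (T + 1)) := by
  let p : Seminorm ℝ (EuclideanSpace ℝ (Fin d)) := Seminorm.of N hN_add hN_smul
  have hpair : ∀ u v w, ⟪gradient f u - gradient f v, w⟫ ≤ L * p (u - v) * p w := by
    intro u v w
    rw [real_inner_comm, mul_comm]
    exact (inner_le_mul_dualNorm p hN_zero w _).trans
      (mul_le_mul_of_nonneg_left (hsmooth u v) (apply_nonneg p w))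
  have hη_pos : 0 < η := by rw [hη]; positivity
  have hstep : ∀ t : ℕ, 1 ≤ t → L * (t : ℝ) ^ 2 ≤ A t / η := fun t _ => by
    rw [hA, hη, div_div_eq_mul_div, div_one]
    nlinarith [mul_nonneg hL.le (sq_nonneg (t : ℝ)), mul_nonneg hL.le (Nat.cast_nonneg (α := ℝ) t)]
  have hx' : ∀ t ≤ T, x t ∈ K ∧
      IsMinOn (fun w => ∑ s ∈ Icc 1 t, (s : ℝ) * ⟪w, y s⟫ + 1 / η * R w) K (x t) := by
    rintro (_ | t) ht
    · refine ⟨hx0 ▸ hzK, isMinOn_iff.2 fun w hw => ?_⟩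
      simpa [hx0] using mul_le_mul_of_nonneg_left (hz w hw) (one_div_pos.2 hη_pos).le
    · exact ⟨(hx _ (Nat.le_add_left 1 t) ht).1, isMinOn_iff.2 (hx _ (Nat.le_add_left 1 t) ht).2⟩
  have hbound := fenchelGame_bound p hconv hdiff hpair hR hKconv hη_pos
    (fun s hs => by exact_mod_cast hs) (fun t => by rw [hA, sum_Icc_one_natCast]) hstep
    hxtil hy hx' hxstar
  rw [hx0, ← hxbar] at hbound
  simp only [hA, hη, div_div_eq_mul_div, div_one] at hbound
  have hT_pos : (0 : ℝ) < T * (T + 1) := mul_pos (Nat.cast_pos.2 hT) (by positivity)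
  rw [le_div_iff₀ hT_pos]
  linarith

/-- Theorem / Nesterov's ∞-memory method: the Fenchel-game dynamics with
Optimistic-FTL for the `y`-player and Be-The-Regularized-Leader (regularizer `R/η`,
`η = 1/(4L)`) for the `x`-player, using weights `α_t = t`, satisfy
`f(x̄_T) - min_{x ∈ 𝒦} f(x) ≤ 8L(R(x*) - R(z))/(T(T+1))`. -/
theorem nesterov_infty_memory_rate {d : ℕ}
    (f : EuclideanSpace ℝ (Fin d) → ℝ)
    (K : Set (EuclideanSpace ℝ (Fin d)))
    (hconv : ConvexOn ℝ Set.univ f)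
    (hlsc : LowerSemicontinuous f)
    (hKcomp : IsCompact K) (hKconv : Convex ℝ K)
    (N : EuclideanSpace ℝ (Fin d) → ℝ)
    -- N is a norm
    (hN_add : ∀ u v, N (u + v) ≤ N u + N v)
    (hN_smul : ∀ (a : ℝ) (u : EuclideanSpace ℝ (Fin d)), N (a • u) = |a| * N u)
    (hN_zero : ∀ u, N u = 0 → u = 0)
    -- f is L-smooth with respect to N
    (L : ℝ) (hL : 0 < L)
    (hdiff : Differentiable ℝ f)
    (hsmooth : ∀ u v, dualNorm N (gradient f u - gradient f v) ≤ L * N (u - v))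
    -- x* minimizes f over K
    (xstar : EuclideanSpace ℝ (Fin d)) (hxstar : xstar ∈ K)
    (hmin : ∀ w ∈ K, f xstar ≤ f w)
    -- R is 1-strongly convex w.r.t. N, minimized over K at z
    (R : EuclideanSpace ℝ (Fin d) → ℝ)
    (hR : ∀ u v : EuclideanSpace ℝ (Fin d), ∀ a : ℝ, 0 ≤ a → a ≤ 1 →
      R (a • u + (1 - a) • v)
        ≤ a * R u + (1 - a) * R v - 1 / 2 * a * (1 - a) * (N (u - v)) ^ 2)
    (z : EuclideanSpace ℝ (Fin d)) (hzK : z ∈ K) (hz : ∀ w ∈ K, R z ≤ R w)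
    (η : ℝ) (hη : η = 1 / (4 * L))
    (T : ℕ) (hT : 1 ≤ T)
    (A : ℕ → ℝ) (hA : ∀ t, A t = (t : ℝ) * (t + 1) / 2)
    -- the game dynamics
    (x : ℕ → EuclideanSpace ℝ (Fin d)) (hx0 : x 0 = z)
    (xtil : ℕ → EuclideanSpace ℝ (Fin d))
    (hxtil : ∀ t, 1 ≤ t →
      xtil t = (A t)⁻¹ • ((t : ℝ) • x (t - 1) + ∑ s ∈ Icc 1 (t - 1), (s : ℝ) • x s))
    (y : ℕ → EuclideanSpace ℝ (Fin d))
    (hy : ∀ t, 1 ≤ t → y t = gradient f (xtil t))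
    (hx : ∀ t, 1 ≤ t → t ≤ T → x t ∈ K ∧ ∀ w ∈ K,
      (∑ s ∈ Icc 1 t, (s : ℝ) * ⟪x t, y s⟫) + (1 / η) * R (x t)
        ≤ (∑ s ∈ Icc 1 t, (s : ℝ) * ⟪w, y s⟫) + (1 / η) * R w)
    (xbar : EuclideanSpace ℝ (Fin d))
    (hxbar : xbar = (A T)⁻¹ • ∑ t ∈ Icc 1 T, (t : ℝ) • x t) :
    f xbar - f xstar ≤ 8 * L * (R xstar - R z) / ((T : ℝ) * (T + 1)) :=
  nesterov_infty_memory_rate_general f K hconv hKconv N hN_add hN_smul hN_zero L hL hdiff hsmooth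
    xstar hxstar R hR z hzK hz η hη T hT A hA x hx0 xtil hxtil y hy hx xbar hxbar
end

section
/- Let 𝒦 ⊆ ℝ^d be convex, let φ : ℝ^d → ℝ be differentiable with Bregman divergence V_c(x) = φ(x) − ⟨∇φ(c), x − c⟩ − φ(c), let c ∈ 𝒦 and y ∈ ℝ^d, and let x⁺ = argmin_{x ∈ 𝒦} [⟨x, y⟩ + V_c(x)]. Then for every x* ∈ 𝒦, ⟨x⁺ − x*, y⟩ ≤ V_c(x*) − V_{x⁺}(x*) − V_c(x⁺). -/
/-!
The three-point identity turns the right-hand side into `⟪∇φ x⁺ - ∇φ c, x* - x⁺⟫`, so the claim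
is `0 ≤ ⟪y + ∇φ x⁺ - ∇φ c, x* - x⁺⟫`. This is the first-order optimality condition for the
minimizer `x⁺` of `x ↦ ⟪x, y⟫ + V_c(x)` over `𝒦`, whose gradient at `x⁺` is `y + ∇φ x⁺ - ∇φ c`,
in the feasible direction `x* - x⁺`.
-/

open scoped RealInnerProductSpace

theorem IsMinOn.hasFDerivWithinAt_sub_nonneg {E : Type*} [NormedAddCommGroup E]
    [NormedSpace ℝ E] {f : E → ℝ} {f' : E →L[ℝ] ℝ} {s : Set E} {a b : E} (h : IsMinOn f s a)
    (hf : HasFDerivWithinAt f f' s a) (hs : Convex ℝ s) (ha : a ∈ s) (hb : b ∈ s) :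
    0 ≤ f' (b - a) :=
  h.localize.hasFDerivWithinAt_nonneg hf <|
    sub_mem_posTangentConeAt_of_segment_subset (hs.segment_subset ha hb)

section Bregman

variable {E : Type*} [NormedAddCommGroup E] [InnerProductSpace ℝ E] [CompleteSpace E]

noncomputable def bregmanDiv (φ : E → ℝ) (c x : E) : ℝ :=
  φ x - ⟪gradient φ c, x - c⟫ - φ c

theorem bregmanDiv_three_point (φ : E → ℝ) (c x z : E) :
    bregmanDiv φ c z - bregmanDiv φ x z - bregmanDiv φ c x =
      ⟪gradient φ x - gradient φ c, z - x⟫ := by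
  simp only [bregmanDiv, inner_sub_left, inner_sub_right]
  ring

theorem hasFDerivAt_bregmanDiv {φ : E → ℝ} {a : E} (hφ : DifferentiableAt ℝ φ a) (c : E) :
    HasFDerivAt (bregmanDiv φ c) (fderiv ℝ φ a - innerSL ℝ (gradient φ c)) a := by
  have hlin : HasFDerivAt (fun x => ⟪gradient φ c, x - c⟫) (innerSL ℝ (gradient φ c)) a := by
    simpa only [inner_sub_right, innerSL_apply_apply] using
      (innerSL ℝ (gradient φ c)).hasFDerivAt.sub_const ⟪gradient φ c, c⟫
  exact (hφ.hasFDerivAt.sub hlin).sub_const (φ c)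

end Bregman

theorem mirror_descent_one_step_general {d : ℕ}
    (K : Set (EuclideanSpace ℝ (Fin d))) (hK : Convex ℝ K)
    (φ : EuclideanSpace ℝ (Fin d) → ℝ) (hφ : Differentiable ℝ φ)
    (V : EuclideanSpace ℝ (Fin d) → EuclideanSpace ℝ (Fin d) → ℝ)
    (hV : ∀ c x, V c x = φ x - ⟪gradient φ c, x - c⟫ - φ c)
    (c : EuclideanSpace ℝ (Fin d))
    (y : EuclideanSpace ℝ (Fin d))
    (xplus : EuclideanSpace ℝ (Fin d)) (hmem : xplus ∈ K)
    (hopt : ∀ w ∈ K, ⟪xplus, y⟫ + V c xplus ≤ ⟪w, y⟫ + V c w) :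
    ∀ xstar ∈ K, ⟪xplus - xstar, y⟫ ≤ V c xstar - V xplus xstar - V c xplus := by
  intro xstar hstar
  obtain rfl : V = bregmanDiv φ := funext₂ hV
  have hmin : IsMinOn (⇑(innerSL ℝ y) + bregmanDiv φ c) K xplus := fun w hw => by
    simpa only [Set.mem_ofPred_eq, Pi.add_apply, innerSL_apply_apply, real_inner_comm y]
      using hopt w hw
  have hfirst := hmin.hasFDerivWithinAt_sub_nonneg
    ((innerSL ℝ y).hasFDerivAt.add (hasFDerivAt_bregmanDiv (hφ xplus) c)).hasFDerivWithinAt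
    hK hmem hstar
  simp only [add_apply, sub_apply, innerSL_apply_apply, ← inner_gradient_left] at hfirst
  rw [bregmanDiv_three_point, ← neg_sub xstar xplus, inner_neg_left, real_inner_comm,
    inner_sub_left]
  linarith

/-- Lemma 1 of Rakhlin–Sridharan 2013: one-step Mirror-Descent inequality.
If `x⁺` minimizes `x ↦ ⟪x, y⟫ + V_c(x)` over the convex set `𝒦`, then for every `x* ∈ 𝒦`,
`⟪x⁺ - x*, y⟫ ≤ V_c(x*) - V_{x⁺}(x*) - V_c(x⁺)`. -/
theorem mirror_descent_one_step {d : ℕ}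
    (K : Set (EuclideanSpace ℝ (Fin d))) (hK : Convex ℝ K)
    (φ : EuclideanSpace ℝ (Fin d) → ℝ) (hφ : Differentiable ℝ φ)
    (V : EuclideanSpace ℝ (Fin d) → EuclideanSpace ℝ (Fin d) → ℝ)
    (hV : ∀ c x, V c x = φ x - ⟪gradient φ c, x - c⟫ - φ c)
    (c : EuclideanSpace ℝ (Fin d)) (hc : c ∈ K)
    (y : EuclideanSpace ℝ (Fin d))
    (xplus : EuclideanSpace ℝ (Fin d)) (hmem : xplus ∈ K)
    (hopt : ∀ w ∈ K, ⟪xplus, y⟫ + V c xplus ≤ ⟪w, y⟫ + V c w) :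
    ∀ xstar ∈ K, ⟪xplus - xstar, y⟫ ≤ V c xstar - V xplus xstar - V c xplus :=
  mirror_descent_one_step_general K hK φ hφ V hV c y xplus hmem hopt
end
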